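/- If a spacetime (M,g) is causally pseudoconvex and disprisoning, then for every p ∈ M the restriction of exp_p to the causal domain C_p ⊂ T_pM is a proper map; in particular exp_p has the causal continuation property. Consequently, every globally hyperbolic spacetime satisfies the causal continuation property at every point. -/

import Mathlib

/-!
Fix `p` and a compact `K`; enlarge `K ∪ {p}` to a compact `K*` by pseudoconvexity, so that every
radial segment `t ↦ exp_p (t v)`, `t ∈ [0,1]`, with `v ∈ C_p` and `exp_p v ∈ K` stays in `K*`.
If such `v` were unbounded, their directions would accumulate at a unit causal vector `l`, and
the whole geodesic ray `t ↦ exp_p (t l)` would be imprisoned in `K*`, against disprisoning. If a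
limit `v` of such vectors left the domain of `exp_p`, the same would happen to the ray in the
direction of `v`, which then lies in the domain only for `t < ‖v‖`. So the preimage is closed and
bounded, hence compact, and the causal continuation property follows by extracting a convergent
subsequence of the lift `σ` inside the compact preimage of `γ([0,1])`.
-/

open Set Filter Topology
open scoped Manifold

section Lorentz

variable {W : Type*} [NormedAddCommGroup W] [NormedSpace ℝ W]
  {Hm : Type*} [TopologicalSpace Hm] (I : ModelWithCorners ℝ W Hm)
  {M : Type*} [TopologicalSpace M] [ChartedSpace Hm M] [IsManifold I (⊤ : ℕ∞) M]

/-- A piecewise smooth curve `γ` on `[a,b]` all of whose velocities satisfy the pointwise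
condition `P` (e.g. being future-directed causal). -/
def PiecewiseSmoothCurveWith (P : M → W → Prop) (γ : ℝ → M) (a b : ℝ) : Prop :=
  a < b ∧ ContinuousOn γ (Icc a b) ∧
    ∃ (n : ℕ) (t : Fin (n + 1) → ℝ), StrictMono t ∧ t 0 = a ∧ t (Fin.last n) = b ∧
      ∀ i : Fin n, ContMDiffOn 𝓘(ℝ, ℝ) I (⊤ : ℕ∞) γ (Icc (t i.castSucc) (t i.succ)) ∧
        ∀ s ∈ Icc (t i.castSucc) (t i.succ),
          P (γ s) (mfderivWithin 𝓘(ℝ, ℝ) I γ (Icc (t i.castSucc) (t i.succ)) s (1 : ℝ))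

end Lorentz

section RadialSegments

open scoped Pointwise

variable {E : Type*} [NormedAddCommGroup E] [NormedSpace ℝ E] {X : Type*} [TopologicalSpace X]
  {C D : Set E} {f : E → X} {K L : Set X}

lemma continuous_apply_self_of_finiteDimensional [FiniteDimensional ℝ E]
    (B : E →ₗ[ℝ] E →ₗ[ℝ] ℝ) : Continuous fun w => B w w :=
  B.toContinuousBilinearMap.continuous.clm_apply continuous_id

lemma closure_setOf_apply_self_neg_subset [FiniteDimensional ℝ E] (B : E →ₗ[ℝ] E →ₗ[ℝ] ℝ) :
    closure {w | B w w < 0} ⊆ {w | B w w ≤ 0} :=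
  closure_minimal (fun w (hw : B w w < 0) => hw.le)
    (isClosed_le (continuous_apply_self_of_finiteDimensional B) continuous_const)

lemma smul_mem_closure_setOf_apply_self_neg (B : E →ₗ[ℝ] E →ₗ[ℝ] ℝ) {c : ℝ} (hc : 0 < c)
    {v : E} (hv : v ∈ closure {w | B w w < 0}) : c • v ∈ closure {w | B w w < 0} := by
  have hsub : c • {w | B w w < 0} ⊆ {w | B w w < 0} := by
    rintro _ ⟨u, hu, rfl⟩
    have hu : B u u < 0 := hu
    show B (c • u) (c • u) < 0
    simpa only [map_smul, LinearMap.smul_apply, smul_eq_mul] using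
      mul_neg_of_pos_of_neg hc (mul_neg_of_pos_of_neg hc hu)
  have hcv : c • v ∈ closure (c • {w | B w w < 0}) := by
    rw [closure_smul₀' hc.ne']
    exact smul_mem_smul_set hv
  exact closure_mono hsub hcv

lemma mem_of_tendsto_direction (hL : IsClosed L) {x : ℕ → E}
    (hseg : ∀ n, ∀ s ∈ Icc (0 : ℝ) 1, f (s • x n) ∈ L) {l : E}
    (hl : Tendsto (fun n => ‖x n‖⁻¹ • x n) atTop (𝓝 l)) {t : ℝ} (ht : 0 ≤ t)
    (hf : ContinuousAt f (t • l)) (hlarge : ∀ᶠ n in atTop, t ≤ ‖x n‖) : f (t • l) ∈ L := by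
  refine hL.mem_of_tendsto (hf.tendsto.comp (hl.const_smul t)) ?_
  filter_upwards [hlarge] with n hn
  rw [Function.comp_apply, smul_smul]
  exact hseg n _ ⟨mul_nonneg ht (inv_nonneg.2 (norm_nonneg _)),
    mul_inv_le_one_of_le₀ hn (norm_nonneg _)⟩

variable (hC : IsClosed C) (hCsmul : ∀ c : ℝ, 0 < c → ∀ v ∈ C, c • v ∈ C)
  (hD : IsOpen D) (hf : ContinuousOn f D) (hL : IsClosed L)
  (hray : ∀ l ∈ C, l ≠ 0 → ¬ ∀ t : ℝ, 0 ≤ t → t • l ∈ D → f (t • l) ∈ L)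
include hC hCsmul hD hf hL hray

lemma isBounded_of_forall_segment_mem [FiniteDimensional ℝ E] {S : Set E} (hSC : S ⊆ C)
    (hseg : ∀ v ∈ S, ∀ s ∈ Icc (0 : ℝ) 1, f (s • v) ∈ L) : Bornology.IsBounded S := by
  by_contra hS
  obtain ⟨x, hxS, hx⟩ : ∃ x : ℕ → E, (∀ n, x n ∈ S) ∧ ∀ n : ℕ, (n : ℝ) < ‖x n‖ := by
    simp only [isBounded_iff_forall_norm_le, not_exists, not_forall, not_le] at hS
    choose x hxS hx using fun n : ℕ => hS (n : ℝ)
    exact ⟨x, hxS, hx⟩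
  have hx0 : ∀ n, 0 < ‖x n‖ := fun n => (Nat.cast_nonneg n).trans_lt (hx n)
  obtain ⟨l, hl, φ, hφ, hlim⟩ := (isCompact_sphere (0 : E) 1).tendsto_subseq
    (x := fun n => ‖x n‖⁻¹ • x n) fun n => by simp [norm_smul, (hx0 n).ne']
  have hl0 : l ≠ 0 := ne_zero_of_mem_unit_sphere ⟨l, hl⟩
  have hlC : l ∈ C := hC.mem_of_tendsto hlim
    (Eventually.of_forall fun n => hCsmul _ (inv_pos.2 (hx0 _)) _ (hSC (hxS _)))
  have hnorm : Tendsto (fun n => ‖x (φ n)‖) atTop atTop :=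
    (tendsto_atTop_mono (fun n => (hx n).le) tendsto_natCast_atTop_atTop).comp hφ.tendsto_atTop
  exact hray l hlC hl0 fun t ht htD => mem_of_tendsto_direction (x := x ∘ φ) hL
    (fun n => hseg _ (hxS _)) hlim ht (hf.continuousAt (hD.mem_nhds htD))
    (hnorm.eventually_ge_atTop t)

lemma isClosed_of_forall_segment_mem (hDstar : StarConvex ℝ 0 D) (hK : IsClosed K)
    (hseg : ∀ v ∈ C ∩ D, f v ∈ K → ∀ s ∈ Icc (0 : ℝ) 1, f (s • v) ∈ L) :
    IsClosed {v | v ∈ C ∩ D ∧ f v ∈ K} := by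
  refine isSeqClosed_iff_isClosed.1 fun x v hx hxv => ?_
  have hvC : v ∈ C := hC.mem_of_tendsto hxv (Eventually.of_forall fun n => (hx n).1.1)
  have hvD : v ∈ D := by
    rcases eq_or_ne v 0 with rfl | hv0
    · exact hDstar.mem ⟨_, (hx 0).1.2⟩
    by_contra hvD
    have hnv : 0 < ‖v‖ := norm_pos_iff.2 hv0
    refine hray (‖v‖⁻¹ • v) (hCsmul _ (inv_pos.2 hnv) v hvC)
      (smul_ne_zero (inv_ne_zero hnv.ne') hv0) fun t ht htD => ?_
    have htv : t < ‖v‖ := by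
      by_contra! hge
      have htpos : 0 < t := hnv.trans_le hge
      refine hvD ?_
      convert starConvex_zero_iff.1 hDstar htD (div_nonneg hnv.le ht)
        ((div_le_one htpos).2 hge) using 1
      rw [smul_smul, smul_smul, div_mul_cancel₀ _ htpos.ne', mul_inv_cancel₀ hnv.ne', one_smul]
    have hnorm : Tendsto (fun n => ‖x n‖) atTop (𝓝 ‖v‖) := hxv.norm
    exact mem_of_tendsto_direction hL (fun n => hseg _ (hx n).1 (hx n).2)
      ((hnorm.inv₀ hnv.ne').smul hxv) ht (hf.continuousAt (hD.mem_nhds htD))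
      ((hnorm.eventually_const_lt htv).mono fun _ => le_of_lt)
  exact ⟨⟨hvC, hvD⟩, hK.mem_of_tendsto ((hf.continuousAt (hD.mem_nhds hvD)).tendsto.comp hxv)
    (Eventually.of_forall fun n => (hx n).2)⟩

lemma isCompact_of_forall_segment_mem [FiniteDimensional ℝ E] (hDstar : StarConvex ℝ 0 D)
    (hK : IsClosed K) (hseg : ∀ v ∈ C ∩ D, f v ∈ K → ∀ s ∈ Icc (0 : ℝ) 1, f (s • v) ∈ L) :
    IsCompact {v | v ∈ C ∩ D ∧ f v ∈ K} :=
  Metric.isCompact_of_isClosed_isBounded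
    (isClosed_of_forall_segment_mem hC hCsmul hD hf hL hray hDstar hK hseg)
    (isBounded_of_forall_segment_mem hC hCsmul hD hf hL hray (fun _ hv => hv.1.1)
      fun v hv => hseg v hv.1 hv.2)

end RadialSegments

lemma IsCompact.exists_tendsto_of_mapsTo_Ico {X : Type*} [TopologicalSpace X]
    [FirstCountableTopology X] {S : Set X}
    (hS : IsCompact S) {a b : ℝ} (hab : a < b) {σ : ℝ → X} (hσ : MapsTo σ (Ico a b) S) :
    ∃ (u : ℕ → ℝ) (v : X), (∀ k, u k ∈ Ico a b) ∧ Tendsto u atTop (𝓝 b) ∧ v ∈ S ∧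
      Tendsto (σ ∘ u) atTop (𝓝 v) := by
  obtain ⟨t, -, ht, htb⟩ := exists_seq_strictMono_tendsto' hab
  obtain ⟨v, hv, φ, hφ, hσv⟩ := hS.tendsto_subseq fun k => hσ (Ioo_subset_Ico_self (ht k))
  exact ⟨t ∘ φ, v, fun k => Ioo_subset_Ico_self (ht _), htb.comp hφ.tendsto_atTop, hv, hσv⟩

theorem pseudoconvex_disprisoning_implies_proper_and_CCP_general
    {W : Type*} [NormedAddCommGroup W] [NormedSpace ℝ W] [FiniteDimensional ℝ W]
    {Hm : Type*} [TopologicalSpace Hm] (I : ModelWithCorners ℝ W Hm)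
    {M : Type*} [TopologicalSpace M] [ChartedSpace Hm M] [IsManifold I (⊤ : ℕ∞) M]
    [T2Space M]
    (g : M → W →ₗ[ℝ] W →ₗ[ℝ] ℝ)
    (T : M → W)
    -- the exponential maps of `(M,g)`, at every point, on maximal star-shaped domains
    (Dom : M → Set W) (Exp : M → W → M)
    (hDom : ∀ x, IsOpen (Dom x))
    (hstar : ∀ x, ∀ w ∈ Dom x, ∀ t ∈ Icc (0 : ℝ) 1, t • w ∈ Dom x)
    (hExpCont : ∀ x, ContinuousOn (Exp x) (Dom x)) (hExp0 : ∀ x, Exp x 0 = x)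
    -- causal pseudoconvexity
    (hpseudo : ∀ K : Set M, IsCompact K → ∃ Kstar : Set M, IsCompact Kstar ∧
      ∀ x : M, ∀ w : W, g x w w ≤ 0 → w ≠ 0 → w ∈ Dom x →
        x ∈ K → Exp x w ∈ K → ∀ t ∈ Icc (0 : ℝ) 1, Exp x (t • w) ∈ Kstar)
    -- the disprisoning condition
    (hdispr : ∀ x : M, ∀ w : W, g x w w ≤ 0 → w ≠ 0 →
      (¬ ∃ C : Set M, IsCompact C ∧
        ∀ t : ℝ, 0 ≤ t → t • w ∈ Dom x → Exp x (t • w) ∈ C) ∧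
      (¬ ∃ C : Set M, IsCompact C ∧
        ∀ t : ℝ, t ≤ 0 → t • w ∈ Dom x → Exp x (t • w) ∈ C)) :
    ∀ p : M,
      -- `exp_p` restricted to the causal cone `C_p` is a proper map
      (∀ K : Set M, IsCompact K →
        IsCompact {v : W | v ∈ closure {w : W | g p w w < 0} ∩ Dom p ∧ Exp p v ∈ K}) ∧
      -- the causal continuation property at `p`
      (∀ γ : ℝ → M,
        PiecewiseSmoothCurveWith I (fun x w => g x w w ≤ 0 ∧ g x w (T x) < 0) γ 0 1 →
        γ 0 = p →
        ∀ b : ℝ, 0 < b → b ≤ 1 →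
          ∀ σ : ℝ → W, ContinuousOn σ (Ico 0 b) → σ 0 = 0 →
            (∀ t ∈ Ico (0 : ℝ) b,
              σ t ∈ closure {w : W | g p w w < 0} ∩ Dom p ∧ Exp p (σ t) = γ t) →
            ∃ (u : ℕ → ℝ) (v : W), (∀ k, u k ∈ Ico (0 : ℝ) b) ∧
              Tendsto u atTop (𝓝 b) ∧ v ∈ Dom p ∧
              Tendsto (fun k => σ (u k)) atTop (𝓝 v)) := by
  intro p
  set C := closure {w : W | g p w w < 0}
  have hCle : C ⊆ {w | g p w w ≤ 0} := closure_setOf_apply_self_neg_subset (g p)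
  have hproper : ∀ K : Set M, IsCompact K → IsCompact {v : W | v ∈ C ∩ Dom p ∧ Exp p v ∈ K} := by
    intro K hK
    obtain ⟨Kstar, hKstar, hseg⟩ := hpseudo (insert p K) (hK.insert p)
    refine isCompact_of_forall_segment_mem (L := insert p Kstar) isClosed_closure
      (fun c hc v hv => smul_mem_closure_setOf_apply_self_neg (g p) hc hv) (hDom p)
      (hExpCont p) (hKstar.insert p).isClosed
      (fun l hl hl0 hprison => (hdispr p l (hCle hl) hl0).1 ⟨_, hKstar.insert p, hprison⟩)
      (starConvex_zero_iff.2 fun w hw a ha0 ha1 => hstar p w hw a ⟨ha0, ha1⟩) hK.isClosed ?_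
    intro v hv hvK s hs
    rcases eq_or_ne v 0 with rfl | hv0
    · simp [hExp0]
    exact mem_insert_of_mem _
      (hseg p v (hCle hv.1) hv0 hv.2 (mem_insert _ _) (mem_insert_of_mem _ hvK) s hs)
  refine ⟨hproper, fun γ hγ _ b hb0 hb1 σ _ _ hσ => ?_⟩
  have hσK : MapsTo σ (Ico 0 b) {v | v ∈ C ∩ Dom p ∧ Exp p v ∈ γ '' Icc 0 1} := fun t ht =>
    ⟨(hσ t ht).1, (hσ t ht).2 ▸ mem_image_of_mem γ ⟨ht.1, ht.2.le.trans hb1⟩⟩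
  obtain ⟨u, v, hu, hub, hv, hσv⟩ := (hproper _ (isCompact_Icc.image_of_continuousOn hγ.2.1))
    |>.exists_tendsto_of_mapsTo_Ico hb0 hσK
  exact ⟨u, v, hu, hub, hv.1.2, hσv⟩

/-- Let `(M,g)` be a spacetime whose geodesics are encoded by the
exponential maps `Exp x : Dom x ⊂ T_xM → M` (maximal star-shaped domains).  If `(M,g)` is
causally pseudoconvex and disprisoning, then for every `p ∈ M` the restriction of `exp_p`
to the causal domain `C_p = closure (timelike vectors at p) ∩ Dom p` is a proper map; in
particular `exp_p` has the causal continuation property at every point.  (Globally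
hyperbolic spacetimes are causally pseudoconvex and disprisoning, so they satisfy the
causal continuation property at every point.) -/
theorem pseudoconvex_disprisoning_implies_proper_and_CCP
    {W : Type*} [NormedAddCommGroup W] [NormedSpace ℝ W] [FiniteDimensional ℝ W]
    {Hm : Type*} [TopologicalSpace Hm] (I : ModelWithCorners ℝ W Hm)
    {M : Type*} [TopologicalSpace M] [ChartedSpace Hm M] [IsManifold I (⊤ : ℕ∞) M]
    [T2Space M] [ConnectedSpace M]
    (g : M → W →ₗ[ℝ] W →ₗ[ℝ] ℝ) (hsymm : ∀ x v w, g x v w = g x w v)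
    (T : M → W) (hT : ∀ x, g x (T x) (T x) < 0)
    -- the exponential maps of `(M,g)`, at every point, on maximal star-shaped domains
    (Dom : M → Set W) (Exp : M → W → M)
    (hDom : ∀ x, IsOpen (Dom x)) (h0Dom : ∀ x, (0 : W) ∈ Dom x)
    (hstar : ∀ x, ∀ w ∈ Dom x, ∀ t ∈ Icc (0 : ℝ) 1, t • w ∈ Dom x)
    (hExpCont : ∀ x, ContinuousOn (Exp x) (Dom x)) (hExp0 : ∀ x, Exp x 0 = x)
    -- causal pseudoconvexity
    (hpseudo : ∀ K : Set M, IsCompact K → ∃ Kstar : Set M, IsCompact Kstar ∧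
      ∀ x : M, ∀ w : W, g x w w ≤ 0 → w ≠ 0 → w ∈ Dom x →
        x ∈ K → Exp x w ∈ K → ∀ t ∈ Icc (0 : ℝ) 1, Exp x (t • w) ∈ Kstar)
    -- the disprisoning condition
    (hdispr : ∀ x : M, ∀ w : W, g x w w ≤ 0 → w ≠ 0 →
      (¬ ∃ C : Set M, IsCompact C ∧
        ∀ t : ℝ, 0 ≤ t → t • w ∈ Dom x → Exp x (t • w) ∈ C) ∧
      (¬ ∃ C : Set M, IsCompact C ∧
        ∀ t : ℝ, t ≤ 0 → t • w ∈ Dom x → Exp x (t • w) ∈ C)) :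
    ∀ p : M,
      -- `exp_p` restricted to the causal cone `C_p` is a proper map
      (∀ K : Set M, IsCompact K →
        IsCompact {v : W | v ∈ closure {w : W | g p w w < 0} ∩ Dom p ∧ Exp p v ∈ K}) ∧
      -- the causal continuation property at `p`
      (∀ γ : ℝ → M,
        PiecewiseSmoothCurveWith I (fun x w => g x w w ≤ 0 ∧ g x w (T x) < 0) γ 0 1 →
        γ 0 = p →
        ∀ b : ℝ, 0 < b → b ≤ 1 →
          ∀ σ : ℝ → W, ContinuousOn σ (Ico 0 b) → σ 0 = 0 →
            (∀ t ∈ Ico (0 : ℝ) b,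
              σ t ∈ closure {w : W | g p w w < 0} ∩ Dom p ∧ Exp p (σ t) = γ t) →
            ∃ (u : ℕ → ℝ) (v : W), (∀ k, u k ∈ Ico (0 : ℝ) b) ∧
              Tendsto u atTop (𝓝 b) ∧ v ∈ Dom p ∧
              Tendsto (fun k => σ (u k)) atTop (𝓝 v)) :=
  pseudoconvex_disprisoning_implies_proper_and_CCP_general I g T Dom Exp hDom hstar hExpCont hExp0
    hpseudo hdispr
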